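/- arXiv:1912.10411 — 5 statements merged into one kernel-verified Lean document; each statement's English description precedes it below -/
import Mathlib

section
/- A function f : \mathbb{R}^+ \to \mathbb{R}^+ is ultrametric preserving if and only if f is amenable and increasing. -/
def IsMetric {X : Type*} (d : X → X → ℝ) : Prop :=
  (∀ x y, d x y = 0 ↔ x = y) ∧ (∀ x y, d x y = d y x) ∧
  (∀ x y z, d x y ≤ d x z + d z y)

def IsUltrametric {X : Type*} (d : X → X → ℝ) : Prop :=
  IsMetric d ∧ ∀ x y z, d x y ≤ max (d x z) (d z y)

def Amenable (f : ℝ → ℝ) : Prop := f 0 = 0 ∧ ∀ x > 0, f x > 0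

def MetricPreserving (f : ℝ → ℝ) : Prop :=
  ∀ (X : Type) (d : X → X → ℝ), IsMetric d → IsMetric (fun x y => f (d x y))

def UltrametricPreserving (f : ℝ → ℝ) : Prop :=
  ∀ (X : Type) (d : X → X → ℝ), IsUltrametric d → IsUltrametric (fun x y => f (d x y))

def TriangleTriplet (a b c : ℝ) : Prop := a ≤ b + c ∧ b ≤ a + c ∧ c ≤ a + b

def StrongTriangleTriplet (a b c : ℝ) : Prop :=
  a ≤ max b c ∧ b ≤ max a c ∧ c ≤ max a b


/-!
A monotone amenable `f` maps `d x y ≤ max (d x z) (d z y)` to the same inequality for `f ∘ d`,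
and the strong triangle inequality alone already makes a symmetric function vanishing exactly on
the diagonal an ultrametric. Conversely, every `f` preserving ultrametrics must preserve the
ultrametric `d x y = max x y` (for `x ≠ y`) on `ℝ≥0`; in it `0, a, b` with `a < b` form an
isosceles triangle with sides `a, b, b`, which forces `f a ≤ f b`.
-/

open scoped NNReal

section LeMax

variable {X : Type*} {d : X → X → ℝ}

lemma nonneg_of_le_max (hzero : ∀ x, d x x = 0) (hsymm : ∀ x y, d x y = d y x)
    (hmax : ∀ x y z, d x y ≤ max (d x z) (d z y)) (x y : X) : 0 ≤ d x y := by
  simpa [hzero x, hsymm y x] using hmax x x y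

lemma IsUltrametric.of_le_max (hzero : ∀ x y, d x y = 0 ↔ x = y)
    (hsymm : ∀ x y, d x y = d y x) (hmax : ∀ x y z, d x y ≤ max (d x z) (d z y)) :
    IsUltrametric d := by
  have hnonneg := nonneg_of_le_max (fun x => (hzero x x).2 rfl) hsymm hmax
  refine ⟨⟨hzero, hsymm, fun x y z => (hmax x y z).trans ?_⟩, hmax⟩
  exact max_le_add_of_nonneg (hnonneg x z) (hnonneg z y)

lemma IsUltrametric.nonneg (hd : IsUltrametric d) (x y : X) : 0 ≤ d x y :=
  nonneg_of_le_max (fun x => (hd.1.1 x x).2 rfl) hd.1.2.1 hd.2 x y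

end LeMax

lemma Amenable.eq_zero_iff {f : ℝ → ℝ} (hf : Amenable f) {t : ℝ} (ht : 0 ≤ t) :
    f t = 0 ↔ t = 0 := by
  refine ⟨fun hft => ?_, fun h => h ▸ hf.1⟩
  by_contra hne
  exact (hf.2 t (lt_of_le_of_ne ht (Ne.symm hne))).ne' hft

lemma IsUltrametric.comp {X : Type*} {d : X → X → ℝ} {f : ℝ → ℝ} (hd : IsUltrametric d)
    (hf : Amenable f) (hmono : MonotoneOn f (Set.Ici 0)) :
    IsUltrametric (fun x y => f (d x y)) := by
  obtain ⟨⟨hzero, hsymm, -⟩, hmax⟩ := id hd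
  refine IsUltrametric.of_le_max (fun x y => ?_) (fun x y => by rw [hsymm]) (fun x y z => ?_)
  · rw [hf.eq_zero_iff (hd.nonneg x y), hzero]
  · rw [← hmono.map_max (hd.nonneg x z) (hd.nonneg z y)]
    exact hmono (hd.nonneg x y) ((hd.nonneg x z).trans (le_max_left _ _)) (hmax x y z)

noncomputable def maxDist (x y : ℝ≥0) : ℝ := if x = y then 0 else max x y

lemma maxDist_of_lt {x y : ℝ≥0} (h : x < y) : maxDist x y = y := by
  simp [maxDist, h.ne, h.le]

lemma maxDist_zero_left (x : ℝ≥0) : maxDist 0 x = x := by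
  by_cases h : 0 = x
  · simp [maxDist, ← h]
  · simp [maxDist, h]

lemma maxDist_comm (x y : ℝ≥0) : maxDist x y = maxDist y x := by
  simp only [maxDist, eq_comm, max_comm]

lemma isUltrametric_maxDist : IsUltrametric maxDist := by
  refine IsUltrametric.of_le_max (fun x y => ?_) maxDist_comm (fun x y z => ?_)
  · by_cases h : x = y
    · simp [maxDist, h]
    · have : (0 : ℝ) < max x y := by
        rcases lt_or_gt_of_ne h with h | h <;> simp [pos_of_gt h]
      simp only [maxDist, h, if_false, iff_false]
      exact this.ne'
  · by_cases hxy : x = y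
    · simp only [maxDist, hxy, if_true]
      split_ifs <;> simp
    by_cases hxz : x = z
    · simp [maxDist, hxz]
    by_cases hzy : z = y
    · simp [maxDist, hzy]
    simp only [maxDist, hxy, hxz, hzy, if_false]
    exact max_le (le_max_of_le_left (le_max_left _ _)) (le_max_of_le_right (le_max_right _ _))

lemma UltrametricPreserving.amenable {f : ℝ → ℝ} (hf : UltrametricPreserving f) :
    Amenable f := by
  have hfd := hf ℝ≥0 maxDist isUltrametric_maxDist
  refine ⟨by simpa [maxDist] using (hfd.1.1 0 0).2 rfl, fun t ht => ?_⟩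
  have hdt : maxDist 0 ⟨t, ht.le⟩ = t := maxDist_zero_left _
  have hne : f t ≠ 0 := by
    rw [← hdt]
    exact fun h => (show (0 : ℝ≥0) ≠ ⟨t, ht.le⟩ from ne_of_lt ht) ((hfd.1.1 _ _).1 h)
  exact lt_of_le_of_ne (hdt ▸ hfd.nonneg _ _) hne.symm

lemma UltrametricPreserving.monotoneOn {f : ℝ → ℝ} (hf : UltrametricPreserving f) :
    MonotoneOn f (Set.Ici 0) := by
  intro a (ha : 0 ≤ a) b _ hab
  rcases hab.eq_or_lt with rfl | hlt
  · rfl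
  let a' : ℝ≥0 := ⟨a, ha⟩
  let b' : ℝ≥0 := ⟨b, ha.trans hab⟩
  have hab' : maxDist b' a' = b' :=
    (maxDist_comm _ _).trans (maxDist_of_lt (show a' < b' from hlt))
  have : f (maxDist 0 a') ≤ max (f (maxDist 0 b')) (f (maxDist b' a')) :=
    (hf ℝ≥0 maxDist isUltrametric_maxDist).2 0 a' b'
  rwa [maxDist_zero_left, maxDist_zero_left, hab', max_self] at this

theorem stmt2 (f : ℝ → ℝ) :
    UltrametricPreserving f ↔
      Amenable f ∧ (∀ a b : ℝ, 0 ≤ a → a ≤ b → f a ≤ f b) := by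
  refine ⟨fun hf => ⟨hf.amenable, fun a b ha hab => hf.monotoneOn ha (ha.trans hab) hab⟩,
    fun ⟨hamen, hmono⟩ X d hd => hd.comp hamen fun a ha b _ hab => hmono a b ha hab⟩
end

section
/- Let f : \mathbb{R}^+ \to \mathbb{R}^+ be metric preserving, x_0 \in \mathbb{R}^+, and f(x_0) = a. Then f(x) \ge a/2 for all x > x_0. -/
/-! Three points at mutual distances `x₀, x, x` form a metric space whenever `0 < x₀ < x`, so
`f x₀ ≤ f x + f x`. For `x₀ = 0` the claim reduces to `f 0 = 0 ≤ f x`, and nonnegativity of `f x`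
comes from the equilateral triangle with side `x`. -/

/-- The metric on three points realizing the side lengths `a = d 1 2`, `b = d 0 2`, `c = d 0 1`. -/
def triangleDist (a b c : ℝ) : Fin 3 → Fin 3 → ℝ :=
  ![![0, c, b], ![c, 0, a], ![b, a, 0]]

theorem isMetric_triangleDist {a b c : ℝ} (ha : 0 < a) (hb : 0 < b) (hc : 0 < c)
    (h : TriangleTriplet a b c) : IsMetric (triangleDist a b c) := by
  obtain ⟨hab, hba, hca⟩ := h
  refine ⟨fun i j => ?_, fun i j => ?_, fun i j k => ?_⟩
  · fin_cases i <;> fin_cases j <;> simp [triangleDist, ha.ne', hb.ne', hc.ne']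
  · fin_cases i <;> fin_cases j <;> rfl
  · fin_cases i <;> fin_cases j <;> fin_cases k <;> simp [triangleDist] <;> linarith

theorem triangleTriplet_isosceles {a b : ℝ} (ha : 0 ≤ a) (h : a ≤ b + b) :
    TriangleTriplet a b b :=
  ⟨h, by linarith, by linarith⟩

theorem isMetric_zero_unit : IsMetric (fun _ _ : Unit => (0 : ℝ)) :=
  ⟨fun _ _ => by simp, fun _ _ => rfl, fun _ _ _ => by simp⟩

namespace MetricPreserving

theorem map_zero {f : ℝ → ℝ} (hf : MetricPreserving f) : f 0 = 0 :=
  ((hf Unit _ isMetric_zero_unit).1 () ()).2 rfl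

theorem triangleTriplet {f : ℝ → ℝ} (hf : MetricPreserving f) {a b c : ℝ}
    (ha : 0 < a) (hb : 0 < b) (hc : 0 < c) (h : TriangleTriplet a b c) : TriangleTriplet (f a) (f b) (f c) := by
  have hd := (hf (Fin 3) _ (isMetric_triangleDist ha hb hc h)).2.2
  exact ⟨hd 2 1 0, hd 2 0 1, hd 1 0 2⟩

theorem nonneg {f : ℝ → ℝ} (hf : MetricPreserving f) {x : ℝ} (hx : 0 < x) : 0 ≤ f x := by
  have := (hf.triangleTriplet hx hx hx (triangleTriplet_isosceles hx.le (by linarith))).1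
  linarith

end MetricPreserving

theorem stmt8 (f : ℝ → ℝ) (hf : MetricPreserving f)
    (x₀ : ℝ) (hx₀ : 0 ≤ x₀) (a : ℝ) (ha : f x₀ = a) :
    ∀ x : ℝ, x₀ < x → a / 2 ≤ f x := by
  intro x hx
  subst ha
  rcases hx₀.eq_or_lt with rfl | hx₀
  · linarith [hf.map_zero, hf.nonneg hx]
  · have hpos : 0 < x := hx₀.trans hx
    have := hf.triangleTriplet hx₀ hpos hpos (triangleTriplet_isosceles hx₀.le (by linarith))
    linarith [this.1]
end

section
/- Let p be a prime. A function f : \mathbb{R}^+ \to \mathbb{R}^+ is p-adic metric preserving (i.e., f \circ d_p is a metric on \mathbb{Q}_p) if and only if f(0) = 0 and 0 < f(p^m) \le 2 f(p^n) holds whenever m, n \in \mathbb{Z} and m < n. -/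
/-!
Every nonzero `p`-adic distance is an integer power of `p`, and every triangle in `ℚ_[p]` is
isosceles with its two longest sides equal. Hence the triangle inequality for `f ∘ d_p` only has
to be checked on triples `(s, t, t)` with `s ≤ t`, where it reads `f s ≤ 2 f t`. Conversely,
`0`, `p ^ (-m)` and `p ^ (-n)` form a triangle with sides `p ^ m, p ^ n, p ^ n`, which forces
this inequality.
-/

open Set

namespace IsMetric

variable {X : Type*} {d : X → X → ℝ}

lemma nonneg (hd : IsMetric d) (x y : X) : 0 ≤ d x y := by
  have h := hd.2.2 x x y
  rw [(hd.1 x x).2 rfl, hd.2.1 y x] at h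
  linarith

lemma pos (hd : IsMetric d) {x y : X} (hxy : x ≠ y) : 0 < d x y :=
  (hd.nonneg x y).lt_of_ne fun h => hxy ((hd.1 x y).1 h.symm)

end IsMetric

lemma StrongTriangleTriplet.le_add {S : Set ℝ} {f : ℝ → ℝ}
    (hf : ∀ s ∈ S, ∀ t ∈ S, s ≤ t → f s ≤ 2 * f t) {a b c : ℝ}
    (ha : a ∈ S) (hb : b ∈ S) (hc : c ∈ S) (habc : StrongTriangleTriplet a b c) :
    f a ≤ f b + f c := by
  obtain ⟨hab_c, hb_ac, hc_ab⟩ := habc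
  have hfb : 0 ≤ f b := by linarith [hf b hb b hb le_rfl]
  have hfc : 0 ≤ f c := by linarith [hf c hc c hc le_rfl]
  -- the maximum of a strong triangle triplet is attained at least twice
  rcases le_total b c with hbc | hcb
  · rcases le_max_iff.1 hc_ab with hca | hcb'
    · have : a = c := le_antisymm (hab_c.trans (max_le hbc le_rfl)) hca
      rw [this]; linarith
    · have hb_eq : b = c := le_antisymm hbc hcb'
      have := hf a ha b hb (hab_c.trans (max_le le_rfl hb_eq.ge))
      rw [← hb_eq]; linarith
  · rcases le_max_iff.1 hb_ac with hba | hbc'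
    · have : a = b := le_antisymm (hab_c.trans (max_le le_rfl hcb)) hba
      rw [this]; linarith
    · have hc_eq : c = b := le_antisymm hcb hbc'
      have := hf a ha b hb (hab_c.trans (max_le le_rfl hc_eq.le))
      rw [hc_eq]; linarith

lemma strongTriangleTriplet_dist {X : Type*} [PseudoMetricSpace X] [IsUltrametricDist X]
    (x y z : X) : StrongTriangleTriplet (dist x y) (dist x z) (dist z y) :=
  ⟨dist_triangle_max x z y, by simpa only [dist_comm y] using dist_triangle_max x y z,
    by simpa only [dist_comm z, max_comm] using dist_triangle_max z x y⟩

theorem isMetric_comp_dist {X : Type*} [MetricSpace X] [IsUltrametricDist X]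
    {S : Set ℝ} {f : ℝ → ℝ} (hS : ∀ x y : X, dist x y ∈ S)
    (hf : ∀ s ∈ S, ∀ t ∈ S, s ≤ t → f s ≤ 2 * f t) (h0 : f 0 = 0)
    (hpos : ∀ t ∈ S, 0 < t → 0 < f t) :
    IsMetric fun x y : X => f (dist x y) := by
  refine ⟨fun x y => ⟨fun hxy => ?_, fun hxy => by simp [hxy, h0]⟩,
    fun x y => by simp only [dist_comm], fun x y z =>
      (strongTriangleTriplet_dist x y z).le_add hf (hS x y) (hS x z) (hS z y)⟩
  by_contra hne
  exact (hpos _ (hS x y) (dist_pos.2 hne)).ne' hxy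

section ZPowCondition

variable {b : ℝ} {f : ℝ → ℝ}
  (hf : ∀ m n : ℤ, m < n → 0 < f (b ^ m) ∧ f (b ^ m) ≤ 2 * f (b ^ n))
include hf

lemma pos_of_zpow_condition (k : ℤ) : 0 < f (b ^ k) :=
  (hf k (k + 1) (lt_add_one k)).1

lemma le_two_mul_of_zpow_condition (hb : 1 < b) (h0 : f 0 = 0) :
    ∀ s ∈ insert 0 (range (b ^ · : ℤ → ℝ)), ∀ t ∈ insert 0 (range (b ^ · : ℤ → ℝ)),
      s ≤ t → f s ≤ 2 * f t := by
  rintro s (rfl | ⟨m, rfl⟩) t (rfl | ⟨n, rfl⟩) hst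
  · simp [h0]
  · rw [h0]; linarith [pos_of_zpow_condition hf n]
  · exact absurd hst (zpow_pos (by linarith) m).not_ge
  · rcases (zpow_le_zpow_iff_right₀ hb).1 hst |>.lt_or_eq with hmn | rfl
    · exact (hf m n hmn).2
    · linarith [pos_of_zpow_condition hf m]

end ZPowCondition

namespace Padic

variable (p : ℕ) [Fact p.Prime]

lemma dist_mem_insert_zero_range_zpow (x y : ℚ_[p]) :
    dist x y ∈ insert 0 (range ((p : ℝ) ^ · : ℤ → ℝ)) := by
  by_cases hxy : x = y
  · simp [hxy]
  · exact Or.inr ⟨-(x - y).valuation,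
      by rw [dist_eq_norm, norm_eq_zpow_neg_valuation (sub_ne_zero.2 hxy)]⟩

lemma exists_isosceles {m n : ℤ} (hmn : m < n) :
    ∃ x y z : ℚ_[p], dist x y = (p : ℝ) ^ m ∧ dist x z = (p : ℝ) ^ n ∧
      dist z y = (p : ℝ) ^ n := by
  have hp : (1 : ℝ) < p := mod_cast (Fact.out : p.Prime).one_lt
  have hdist : ∀ k : ℤ, dist (0 : ℚ_[p]) ((p : ℚ_[p]) ^ (-k)) = (p : ℝ) ^ k := fun k => by
    rw [dist_zero_left, norm_p_zpow, neg_neg]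
  have hlt : (p : ℝ) ^ m < (p : ℝ) ^ n := zpow_lt_zpow_right₀ hp hmn
  refine ⟨0, (p : ℚ_[p]) ^ (-m), (p : ℚ_[p]) ^ (-n), hdist m, hdist n, ?_⟩
  rw [IsUltrametricDist.dist_eq_max_of_dist_ne_dist _ 0 _
      (by rw [dist_comm, hdist, hdist]; exact hlt.ne'),
    dist_comm, hdist, hdist, max_eq_left hlt.le]

end Padic

theorem stmt11 (p : ℕ) [Fact p.Prime] (f : ℝ → ℝ) :
    IsMetric (fun x y : ℚ_[p] => f (dist x y)) ↔
      (f 0 = 0 ∧ ∀ m n : ℤ, m < n →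
        0 < f ((p : ℝ) ^ m) ∧ f ((p : ℝ) ^ m) ≤ 2 * f ((p : ℝ) ^ n)) := by
  have hp : (1 : ℝ) < p := mod_cast (Fact.out : p.Prime).one_lt
  constructor
  · intro hmetric
    refine ⟨by simpa using (hmetric.1 (0 : ℚ_[p]) 0).2 rfl, fun m n hmn => ?_⟩
    obtain ⟨x, y, z, hxy, hxz, hzy⟩ := Padic.exists_isosceles p hmn
    have hne : x ≠ y := dist_ne_zero.1 (hxy ▸ (zpow_pos (by linarith) m).ne')
    refine ⟨hxy ▸ hmetric.pos hne, ?_⟩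
    simpa only [hxy, hxz, hzy, two_mul] using hmetric.2.2 x y z
  · rintro ⟨h0, hf⟩
    refine isMetric_comp_dist (Padic.dist_mem_insert_zero_range_zpow p)
      (le_two_mul_of_zpow_condition hf hp h0) h0 ?_
    rintro t (rfl | ⟨k, rfl⟩) ht
    · exact absurd ht (lt_irrefl 0)
    · exact pos_of_zpow_condition hf k
end

section
/- The function f defined by f(x) = 1/x for x > 0 and f(0) = 0 is amenable and satisfies f(2^{n-1}) \le 2 f(2^n) for all n \in \mathbb{Z}, but f \circ d_2 is not a metric on \mathbb{Q}_2; specifically for x=1, y=-3, z=0 the values f(|x-z|_2) = f(|z-y|_2) = 1 and f(|x-y|_2) = 4 violate the triangle inequality. -/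
/-! Since `0⁻¹ = 0` in `ℝ`, `f` is plain inversion. In `ℚ_[2]` the points `1` and `-3` are both at
distance `1` from `0` but at distance `|4|₂ = 1/4` from each other, and inversion turns the valid
inequality `1/4 ≤ 1 + 1` into the false `4 ≤ 1 + 1`. -/

lemma ite_eq_zero_one_div_eq_inv (x : ℝ) : (if x = 0 then 0 else 1 / x) = x⁻¹ := by
  split_ifs with hx <;> simp [hx]

lemma amenable_inv : Amenable fun x : ℝ => x⁻¹ :=
  ⟨inv_zero, fun _ hx => inv_pos.2 hx⟩

lemma inv_zpow_sub_one {K : Type*} [DivisionRing K] {a : K} (ha : a ≠ 0) (n : ℤ) :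
    (a ^ (n - 1))⁻¹ = a * (a ^ n)⁻¹ := by
  rw [zpow_sub_one₀ ha, mul_inv_rev, inv_inv]

lemma not_isMetric_of_lt {X : Type*} {d : X → X → ℝ} {x y z : X} (h : d x z + d z y < d x y) :
    ¬ IsMetric d :=
  fun hd => (hd.2.2 x y z).not_gt h

lemma Padic.dist_zero_neg_three : dist (0 : ℚ_[2]) (-3) = 1 := by
  rw [dist_eq_norm, zero_sub, neg_neg, show (3 : ℚ_[2]) = (3 : ℕ) by norm_num,
    Padic.norm_natCast_eq_one_iff]
  norm_num

lemma Padic.dist_one_neg_three : dist (1 : ℚ_[2]) (-3) = 4⁻¹ := by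
  rw [dist_eq_norm, show (1 : ℚ_[2]) - -3 = (2 : ℕ) ^ 2 by norm_num, Padic.norm_p_pow]
  norm_num

theorem stmt14 :
    let f : ℝ → ℝ := fun x => if x = 0 then 0 else 1 / x
    Amenable f ∧
    (∀ n : ℤ, f ((2 : ℝ) ^ (n - 1)) ≤ 2 * f ((2 : ℝ) ^ n)) ∧
    ¬ IsMetric (fun x y : ℚ_[2] => f (dist x y)) ∧
    f (dist (1 : ℚ_[2]) 0) = 1 ∧
    f (dist (0 : ℚ_[2]) (-3)) = 1 ∧
    f (dist (1 : ℚ_[2]) (-3)) = 4 ∧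
    f (dist (1 : ℚ_[2]) (-3)) > f (dist (1 : ℚ_[2]) 0) + f (dist (0 : ℚ_[2]) (-3)) := by
  intro f
  have hf : ∀ x, f x = x⁻¹ := ite_eq_zero_one_div_eq_inv
  have h10 : f (dist (1 : ℚ_[2]) 0) = 1 := by simp [hf]
  have h03 : f (dist (0 : ℚ_[2]) (-3)) = 1 := by simp [hf, Padic.dist_zero_neg_three]
  have h13 : f (dist (1 : ℚ_[2]) (-3)) = 4 := by simp [hf, Padic.dist_one_neg_three]
  have hfails : f (dist (1 : ℚ_[2]) 0) + f (dist (0 : ℚ_[2]) (-3)) < f (dist (1 : ℚ_[2]) (-3)) := by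
    rw [h10, h03, h13]
    norm_num
  refine ⟨?_, fun n => ?_, not_isMetric_of_lt hfails, h10, h03, h13, hfails⟩
  · simpa only [Amenable, hf] using amenable_inv
  · rw [hf, hf, inv_zpow_sub_one two_ne_zero]
end

section
/- Let U be a non-empty class of non-empty ultrametric spaces, Ran_U the union of the ranges of their metrics, and G_U the relation on Ran_U with \langle s,t \rangle \in G_U iff there exist (X,d) \in U and x_1,x_2,x_3 \in X with s = d(x_1,x_3) and t = d(x_1,x_2) = d(x_2,x_3). Then the relation \preccurlyeq_U, defined as the union of the transitive closure of G_U with the diagonal on Ran_U, is a partial order on Ran_U; moreover 0 \in Ran_U and 0 is the least element of (Ran_U, \preccurlyeq_U). -/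
/-! By the strong triangle inequality, the third side of a triangle whose other two sides equal `t`
is at most `t`, so `G s t` forces `s ≤ t`; hence `≼_U` is contained in `≤` on `ℝ`, which gives
antisymmetry. The degenerate triangle `(x, y, x)` witnesses `G 0 (d x y)`, so `0` lies below every
distance. -/

namespace Relation

variable {α : Type*} {r : α → α → Prop} {a b c : α}

theorem transGen_or_eq_trans (hab : TransGen r a b ∨ a = b) (hbc : TransGen r b c ∨ b = c) :
    TransGen r a c ∨ a = c := by
  rcases hab with hab | rfl
  · rcases hbc with hbc | rfl
    · exact .inl (hab.trans hbc)
    · exact .inl hab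
  · exact hbc

theorem le_of_transGen_or_eq [Preorder α] (hr : ∀ a b, r a b → a ≤ b)
    (hab : TransGen r a b ∨ a = b) : a ≤ b := by
  rcases hab with hab | rfl
  · exact hab.trans_induction_on (hr _ _) fun _ _ => le_trans
  · exact le_rfl

end Relation

namespace IsUltrametric

variable {X : Type*} {d : X → X → ℝ}

theorem dist_self (hd : IsUltrametric d) (x : X) : d x x = 0 :=
  (hd.1.1 x x).mpr rfl

theorem dist_comm (hd : IsUltrametric d) (x y : X) : d x y = d y x :=
  hd.1.2.1 x y

theorem dist_le_of_dist_eq_of_dist_eq (hd : IsUltrametric d) {x₁ x₂ x₃ : X} {t : ℝ}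
    (h₁₂ : t = d x₁ x₂) (h₂₃ : t = d x₂ x₃) : d x₁ x₃ ≤ t := by
  simpa only [← h₁₂, ← h₂₃, max_self] using hd.2 x₁ x₃ x₂

end IsUltrametric

theorem stmt17 (ι : Type*) [Nonempty ι] (X : ι → Type*) (hX : ∀ i, Nonempty (X i))
    (d : ∀ i, X i → X i → ℝ) (hd : ∀ i, IsUltrametric (d i)) :
    let RanU : Set ℝ := {t | ∃ i x y, d i x y = t}
    let G : ℝ → ℝ → Prop := fun s t =>
      ∃ (i : ι) (x₁ x₂ x₃ : X i), s = d i x₁ x₃ ∧ t = d i x₁ x₂ ∧ t = d i x₂ x₃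
    let R : ℝ → ℝ → Prop := fun s t => Relation.TransGen G s t ∨ s = t
    (∀ s, R s s) ∧
    (∀ s t u, R s t → R t u → R s u) ∧
    (∀ s t, s ∈ RanU → t ∈ RanU → R s t → R t s → s = t) ∧
    (0 : ℝ) ∈ RanU ∧
    (∀ t ∈ RanU, R 0 t) := by
  intro RanU G R
  have G_le : ∀ s t, G s t → s ≤ t := by
    rintro s t ⟨i, x₁, x₂, x₃, rfl, h₁₂, h₂₃⟩
    exact (hd i).dist_le_of_dist_eq_of_dist_eq h₁₂ h₂₃
  refine ⟨fun s => .inr rfl, fun s t u => Relation.transGen_or_eq_trans, ?_, ?_, ?_⟩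
  · intro s t _ _ hst hts
    exact le_antisymm (Relation.le_of_transGen_or_eq G_le hst)
      (Relation.le_of_transGen_or_eq G_le hts)
  · obtain ⟨i⟩ := ‹Nonempty ι›
    obtain ⟨x⟩ := hX i
    exact ⟨i, x, x, (hd i).dist_self x⟩
  · rintro t ⟨i, x, y, rfl⟩
    exact .inl (.single ⟨i, x, y, x, ((hd i).dist_self x).symm, rfl, (hd i).dist_comm x y⟩)
end
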